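/- arXiv:2207.05639 — 5 statements merged into one kernel-verified Lean document; each statement's English description precedes it below -/
import Mathlib

section
/- For every integer n ≥ 3, the positive co-degree Turán number of K₄ satisfies n/2 − 1 ≤ co⁺ex(n, K₄) ≤ 2n/3. -/
open Finset

/-- The co-degree of a vertex set `S` in the hypergraph with edge set `E`:
the number of edges containing `S`. -/
def coDeg {n : ℕ} (E : Finset (Finset (Fin n))) (S : Finset (Fin n)) : ℕ :=
  (E.filter (fun e => S ⊆ e)).card

/-- The minimum positive co-degree `δ⁺_{r-1}` of an `r`-graph on `Fin n` with edge set `E`: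
the largest `k` such that every `(r-1)`-set of vertices contained in at least one edge is
contained in at least `k` edges (i.e. the minimum of the positive co-degrees). -/
noncomputable def minPosCoDeg (r n : ℕ) (E : Finset (Finset (Fin n))) : ℕ :=
  sInf {d : ℕ | ∃ S : Finset (Fin n), S.card = r - 1 ∧ coDeg E S = d ∧ 0 < d}

/-- `E` contains a copy of `F`: an injection of the vertices of `F` mapping
edges of `F` to edges of `E`. -/
def Contains {α β : Type*} [DecidableEq α] [DecidableEq β]
    (F : Finset (Finset α)) (E : Finset (Finset β)) : Prop :=
  ∃ f : α → β, Function.Injective f ∧ ∀ e ∈ F, e.image f ∈ E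

/-- The positive co-degree Turán number `co⁺ex_r(n, F)`: the maximum of the minimum positive
co-degree over all `F`-free `r`-graphs on `n` vertices with at least one edge. -/
noncomputable def coPlusEx {α : Type*} [DecidableEq α] (r n : ℕ) (F : Finset (Finset α)) : ℕ :=
  sSup {d : ℕ | ∃ E : Finset (Finset (Fin n)),
    (∀ e ∈ E, e.card = r) ∧ E.Nonempty ∧ ¬ Contains F E ∧ minPosCoDeg r n E = d}


def K4minus : Finset (Finset (Fin 4)) := {{0,1,2}, {0,1,3}, {0,2,3}}

def K4 : Finset (Finset (Fin 4)) := {{0,1,2}, {0,1,3}, {0,2,3}, {1,2,3}}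

def F5 : Finset (Finset (Fin 5)) := {{0,1,2}, {0,1,3}, {2,3,4}}

def F32 : Finset (Finset (Fin 5)) := {{0,1,2}, {0,3,4}, {1,3,4}, {2,3,4}}

def Fano : Finset (Finset (Fin 7)) :=
  {{0,1,2}, {2,3,4}, {0,4,5}, {1,3,5}, {0,3,6}, {1,4,6}, {2,5,6}}

def F33 : Finset (Finset (Fin 6)) :=
  {{0,1,2}, {0,3,4}, {0,3,5}, {0,4,5}, {1,3,4}, {1,3,5}, {1,4,5}, {2,3,4}, {2,3,5}, {2,4,5}}

def C5 : Finset (Finset (Fin 5)) := {{0,1,2}, {1,2,3}, {2,3,4}, {0,3,4}, {0,1,4}}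

def C5minus : Finset (Finset (Fin 5)) := {{0,1,2}, {1,2,3}, {2,3,4}, {0,3,4}}

def K222 : Finset (Finset (Fin 6)) :=
  {{0,2,4}, {0,2,5}, {0,3,4}, {0,3,5}, {1,2,4}, {1,2,5}, {1,3,4}, {1,3,5}}

/-- `J k`: the 3-graph on `k+1` vertices whose edges are all triples containing the
distinguished vertex `0`. -/
def Jgraph (k : ℕ) : Finset (Finset (Fin (k+1))) :=
  (Finset.univ.powersetCard 3).filter (fun e => (0 : Fin (k+1)) ∈ e)

/-- `E` is (isomorphic to) the complete balanced `k`-partite 3-graph on `n` vertices: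
there is a partition of the vertices into `k` classes whose sizes differ by at most one,
such that the edges are exactly the triples of vertices in three pairwise distinct classes. -/
def IsCompleteBalancedMultipartite (n k : ℕ) (E : Finset (Finset (Fin n))) : Prop :=
  ∃ f : Fin n → Fin k,
    (∀ i j : Fin k, (Finset.univ.filter (fun v => f v = i)).card ≤
      (Finset.univ.filter (fun v => f v = j)).card + 1) ∧
    ∀ e : Finset (Fin n), e ∈ E ↔ (e.card = 3 ∧ (e.image f).card = 3)

/-- The unique (6,3,2)-design `H₆`. -/
def H6 : Finset (Finset (Fin 6)) :=
  {{0,1,2}, {0,1,3}, {2,3,4}, {2,3,5}, {0,4,5}, {1,4,5}, {0,2,4}, {0,3,5}, {1,2,5}, {1,3,4}}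

/-- `E` is (isomorphic to) a balanced blow-up of `H₆` on `n` vertices: the vertices are
partitioned into six classes of equal size, and the edges are exactly the triples whose
three vertices lie in classes forming an edge of `H₆`. -/
def IsBalancedH6Blowup (n : ℕ) (E : Finset (Finset (Fin n))) : Prop :=
  ∃ f : Fin n → Fin 6,
    (∀ i j : Fin 6, (Finset.univ.filter (fun v => f v = i)).card =
      (Finset.univ.filter (fun v => f v = j)).card) ∧
    ∀ e : Finset (Fin n), e ∈ E ↔ (e.card = 3 ∧ e.image f ∈ H6)

lemma inj4 {β : Type*} [DecidableEq β] (x y z w : β) (hxy : x≠y) (hxz : x≠z) (hyz : y≠z)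
    (hwx : w≠x) (hwy : w≠y) (hwz : w≠z) :
    Function.Injective (fun i : Fin 4 => if i = 0 then x else if i = 1 then y else if i = 2 then z else w) := by
  intro i j hij
  fin_cases i <;> fin_cases j <;> simp_all

lemma card_filter_triple {α : Type*} [DecidableEq α] (Q : α → Prop) [DecidablePred Q]
    {a b c : α} (hab : a ≠ b) (hac : a ≠ c) (hbc : b ≠ c) :
    (({a,b,c} : Finset α).filter Q).card =
      (if Q a then 1 else 0) + ((if Q b then 1 else 0) + (if Q c then 1 else 0)) := by
  rw [Finset.card_filter]
  rw [show ({a,b,c} : Finset α) = insert a (insert b {c}) from rfl]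
  rw [Finset.sum_insert (by simp [hab, hac]), Finset.sum_insert (by simp [hbc]),
    Finset.sum_singleton]

lemma upperK4 (n : ℕ) (E : Finset (Finset (Fin n))) (hE3 : ∀ e ∈ E, e.card = 3)
    (hne : E.Nonempty) (hfree : ¬ Contains K4 E) : 3 * minPosCoDeg 3 n E ≤ 2 * n := by
  by_contra hcon
  push_neg at hcon
  set d := minPosCoDeg 3 n E with hd
  obtain ⟨e, he⟩ := hne
  obtain ⟨x, y, z, hxy, hxz, hyz, rfl⟩ := Finset.card_eq_three.mp (hE3 e he)
  set N : Finset (Fin n) → Finset (Fin n) :=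
    fun S => univ.filter (fun w => w ∉ S ∧ insert w S ∈ E) with hN
  have key : ∀ S : Finset (Fin n), S.card = 2 → S ⊆ ({x,y,z} : Finset (Fin n)) →
      d ≤ (N S).card := by
    intro S hS2 hsub
    have hdle : d ≤ coDeg E S := by
      apply Nat.sInf_le
      refine ⟨S, by norm_num [hS2], rfl, ?_⟩
      exact card_pos.mpr ⟨{x,y,z}, mem_filter.mpr ⟨he, hsub⟩⟩
    refine hdle.trans ?_
    have himg : E.filter (fun e' => S ⊆ e') ⊆ (N S).image (fun w => insert w S) := by
      intro e' he'
      rw [mem_filter] at he'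
      have hc3 := hE3 e' he'.1
      have hcd : (e' \ S).card = 1 := by rw [card_sdiff_of_subset he'.2]; omega
      obtain ⟨w, hw⟩ := Finset.card_eq_one.mp hcd
      have hwm : w ∈ e' \ S := hw ▸ mem_singleton_self w
      rw [mem_sdiff] at hwm
      have heq : insert w S = e' := by
        apply Finset.eq_of_subset_of_card_le
        · exact insert_subset_iff.mpr ⟨hwm.1, he'.2⟩
        · rw [hc3, card_insert_of_notMem hwm.2, hS2]
      rw [Finset.mem_image]
      refine ⟨w, ?_, heq⟩
      simp only [hN, mem_filter, mem_univ, true_and]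
      exact ⟨hwm.2, heq ▸ he'.1⟩
    exact (card_le_card himg).trans Finset.card_image_le
  have h1 := key {x,y} (by simp [hxy]) (by intro a ha; simp at ha ⊢; tauto)
  have h2 := key {y,z} (by simp [hyz]) (by intro a ha; simp at ha ⊢; tauto)
  have h3 := key {x,z} (by simp [hxz]) (by intro a ha; simp at ha ⊢; tauto)
  have hu1 : (N {x,y} ∪ N {y,z}).card ≤ n := (card_le_univ _).trans_eq (by simp)
  have hu2 : ((N {x,y} ∩ N {y,z}) ∪ N {x,z}).card ≤ n := (card_le_univ _).trans_eq (by simp)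
  have hc1 := Finset.card_inter_add_card_union (N {x,y}) (N {y,z})
  have hc2 := Finset.card_inter_add_card_union (N {x,y} ∩ N {y,z}) (N {x,z})
  have hpos : 0 < ((N {x,y} ∩ N {y,z}) ∩ N {x,z}).card := by omega
  obtain ⟨w, hw⟩ := card_pos.mp hpos
  rw [mem_inter, mem_inter] at hw
  obtain ⟨⟨hw1, hw2⟩, hw3⟩ := hw
  simp only [hN, mem_filter, mem_univ, true_and, mem_insert, mem_singleton] at hw1 hw2 hw3
  obtain ⟨hwxy, hexy⟩ := hw1
  obtain ⟨hwyz, heyz⟩ := hw2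
  obtain ⟨hwxz, hexz⟩ := hw3
  push_neg at hwxy hwyz hwxz
  apply hfree
  set f : Fin 4 → Fin n := fun i => if i = 0 then x else if i = 1 then y else if i = 2 then z else w with hf
  have f0 : f 0 = x := rfl
  have f1 : f 1 = y := rfl
  have f2 : f 2 = z := rfl
  have f3 : f 3 = w := rfl
  refine ⟨f, inj4 x y z w hxy hxz hyz hwxy.1 hwxy.2 hwyz.2, ?_⟩
  intro e' he'
  clear hc1 hc2 h1 h2 h3 hu1 hu2 hpos key hcon
  fin_cases he' <;>
    simp only [Finset.image_insert, Finset.image_singleton, f0, f1, f2, f3]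
  · exact he
  · have h : ({x,y,w} : Finset (Fin n)) = insert w {x,y} := by ext a; simp; tauto
    rw [h]; exact hexy
  · have h : ({x,z,w} : Finset (Fin n)) = insert w {x,z} := by ext a; simp; tauto
    rw [h]; exact hexz
  · have h : ({y,z,w} : Finset (Fin n)) = insert w {y,z} := by ext a; simp; tauto
    rw [h]; exact heyz


lemma card_filter_triple' {α : Type*} [DecidableEq α] (Q : α → Prop) [DecidablePred Q]
    {a b c : α} (hab : a ≠ b) (hac : a ≠ c) (hbc : b ≠ c) :
    (({a,b,c} : Finset α).filter Q).card =
      (if Q a then 1 else 0) + ((if Q b then 1 else 0) + (if Q c then 1 else 0)) := by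
  rw [Finset.card_filter]
  rw [show ({a,b,c} : Finset α) = insert a (insert b {c}) from rfl]
  rw [Finset.sum_insert (by simp [hab, hac]), Finset.sum_insert (by simp [hbc]),
    Finset.sum_singleton]

lemma lowerK4 (n : ℕ) (hn : 3 ≤ n) : ∃ E : Finset (Finset (Fin n)),
    (∀ e ∈ E, e.card = 3) ∧ E.Nonempty ∧ ¬ Contains K4 E ∧
    (n-1)/2 ≤ minPosCoDeg 3 n E := by
  set k := (n-1)/2 with hk
  have hk1 : 1 ≤ k := by omega
  have hkn : k + 1 < n := by omega
  have h2k : 2 * k + 1 ≤ n := by omega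
  set Q : Fin n → Prop := fun v => v.val < k with hQ
  set E := (powersetCard 3 (univ : Finset (Fin n))).filter
      (fun e => (e.filter Q).card = 1) with hE
  have hmem : ∀ e, e ∈ E ↔ e.card = 3 ∧ (e.filter Q).card = 1 := by
    intro e
    simp [hE, Finset.mem_powersetCard_univ]
  have hA : (univ.filter Q).card = k := by
    have him : (univ.filter Q).image Fin.val = range k := by
      ext m
      simp only [mem_image, mem_filter, mem_univ, true_and, mem_range, hQ]
      constructor
      · rintro ⟨v, hv, rfl⟩; exact hv
      · intro hm; exact ⟨⟨m, by omega⟩, hm, rfl⟩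
    calc (univ.filter Q).card = ((univ.filter Q).image Fin.val).card :=
          (Finset.card_image_of_injective _ Fin.val_injective).symm
      _ = k := by rw [him, card_range]
  -- vertices
  set a0 : Fin n := ⟨0, by omega⟩ with ha0
  set aK : Fin n := ⟨k, by omega⟩ with haK
  set aK1 : Fin n := ⟨k+1, hkn⟩ with haK1
  have ne01 : a0 ≠ aK := by simp [ha0, haK, Fin.ext_iff]; omega
  have ne02 : a0 ≠ aK1 := by simp [ha0, haK1, Fin.ext_iff]
  have ne12 : aK ≠ aK1 := by simp [haK, haK1, Fin.ext_iff]
  have he0 : ({a0, aK, aK1} : Finset (Fin n)) ∈ E := by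
    rw [hmem]
    constructor
    · rw [card_insert_of_notMem (by simp [ne01, ne02]),
        card_insert_of_notMem (by simp [ne12]), card_singleton]
    · rw [card_filter_triple' Q ne01 ne02 ne12]
      rw [if_pos (show Q a0 by simp [hQ, ha0]; omega),
        if_neg (show ¬ Q aK by simp [hQ, haK]),
        if_neg (show ¬ Q aK1 by simp [hQ, haK1])]
  refine ⟨E, ?_, ⟨_, he0⟩, ?_, ?_⟩
  · intro e he; exact ((hmem e).mp he).1
  · -- K4-free
    rintro ⟨f, hinj, hmap⟩
    have hne : ∀ i j : Fin 4, i ≠ j → f i ≠ f j := fun i j h hc => h (hinj hc)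
    have h1 := ((hmem _).mp (hmap {0,1,2} (by decide))).2
    have h2 := ((hmem _).mp (hmap {0,1,3} (by decide))).2
    have h3 := ((hmem _).mp (hmap {0,2,3} (by decide))).2
    have h4 := ((hmem _).mp (hmap {1,2,3} (by decide))).2
    rw [Finset.image_insert, Finset.image_insert, Finset.image_singleton,
      card_filter_triple' Q (hne 0 1 (by decide)) (hne 0 2 (by decide)) (hne 1 2 (by decide))] at h1
    rw [Finset.image_insert, Finset.image_insert, Finset.image_singleton,
      card_filter_triple' Q (hne 0 1 (by decide)) (hne 0 3 (by decide)) (hne 1 3 (by decide))] at h2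
    rw [Finset.image_insert, Finset.image_insert, Finset.image_singleton,
      card_filter_triple' Q (hne 0 2 (by decide)) (hne 0 3 (by decide)) (hne 2 3 (by decide))] at h3
    rw [Finset.image_insert, Finset.image_insert, Finset.image_singleton,
      card_filter_triple' Q (hne 1 2 (by decide)) (hne 1 3 (by decide)) (hne 2 3 (by decide))] at h4
    split_ifs at h1 h2 h3 h4 <;> omega
  · -- min positive codegree ≥ k
    apply le_csInf
    · refine ⟨coDeg E {a0, aK}, {a0, aK}, by simp [ne01], rfl, ?_⟩
      refine card_pos.mpr ⟨{a0, aK, aK1}, mem_filter.mpr ⟨he0, ?_⟩⟩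
      intro a ha; simp at ha ⊢; tauto
    · rintro d ⟨S, hS2, rfl, hpos⟩
      norm_num at hS2
      obtain ⟨e, hef⟩ := card_pos.mp hpos
      rw [mem_filter] at hef
      obtain ⟨heE, heS⟩ := hef
      have hecard := (hmem e).mp heE
      have ht : (S.filter Q).card ≤ 1 :=
        hecard.2 ▸ card_le_card (filter_subset_filter _ heS)
      -- a common sufficient criterion
      suffices h : ∃ W : Finset (Fin n), k ≤ W.card ∧ ∀ w ∈ W, w ∉ S ∧ insert w S ∈ E by
        obtain ⟨W, hWk, hW⟩ := h
        refine hWk.trans ?_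
        apply Finset.card_le_card_of_injOn (fun w => insert w S)
        · intro w hw
          exact mem_filter.mpr ⟨(hW w hw).2, subset_insert _ _⟩
        · intro w1 h1 w2 h2 heq
          simp only at heq
          have : w1 ∈ insert w2 S := heq ▸ mem_insert_self w1 S
          rcases mem_insert.mp this with h | h
          · exact h
          · exact absurd h (hW w1 h1).1
      rcases Nat.le_one_iff_eq_zero_or_eq_one.mp ht with h0 | h1
      · -- no vertex of S in A; add vertices of A
        have hSQ : S.filter Q = ∅ := card_eq_zero.mp h0
        refine ⟨univ.filter Q, hA.ge, ?_⟩
        intro w hw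
        rw [mem_filter] at hw
        have hwS : w ∉ S := by
          intro h
          have : w ∈ S.filter Q := mem_filter.mpr ⟨h, hw.2⟩
          rw [hSQ] at this; simp at this
        refine ⟨hwS, (hmem _).mpr ⟨?_, ?_⟩⟩
        · rw [card_insert_of_notMem hwS, hS2]
        · rw [filter_insert, if_pos hw.2, hSQ]; simp
      · -- one vertex of S in A; add vertices of B outside S
        refine ⟨univ.filter (fun v => ¬ Q v ∧ v ∉ S), ?_, ?_⟩
        · have hcov : univ.filter (fun v => ¬ Q v) ⊆
              (univ.filter (fun v => ¬ Q v ∧ v ∉ S)) ∪ (S.filter (fun v => ¬ Q v)) := by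
            intro v hv
            rw [mem_filter] at hv
            by_cases hvS : v ∈ S
            · exact mem_union_right _ (mem_filter.mpr ⟨hvS, hv.2⟩)
            · exact mem_union_left _ (mem_filter.mpr ⟨mem_univ v, hv.2, hvS⟩)
          have hc1 : (univ.filter (fun v => ¬ Q v)).card = n - k := by
            have := Finset.card_filter_add_card_filter_not (s := (univ : Finset (Fin n))) (p := Q)
            rw [hA] at this
            simp only [card_univ, Fintype.card_fin] at this
            omega
          have hc2 : (S.filter (fun v => ¬ Q v)).card = 1 := by
            have := Finset.card_filter_add_card_filter_not (s := S) (p := Q)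
            rw [h1, hS2] at this
            omega
          have := (card_le_card hcov).trans (card_union_le _ _)
          omega
        · intro w hw
          rw [mem_filter] at hw
          obtain ⟨-, hwQ, hwS⟩ := hw
          refine ⟨hwS, (hmem _).mpr ⟨?_, ?_⟩⟩
          · rw [card_insert_of_notMem hwS, hS2]
          · rw [filter_insert, if_neg hwQ, h1]


/-- For every `n ≥ 3`, `n/2 - 1 ≤ co⁺ex(n, K₄) ≤ 2n/3`. -/
theorem coPlusEx_K4 (n : ℕ) (hn : 3 ≤ n) :
    (n : ℝ) / 2 - 1 ≤ (coPlusEx 3 n K4 : ℝ) ∧ (coPlusEx 3 n K4 : ℝ) ≤ 2 * n / 3 := by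
  obtain ⟨E0, hE03, hE0ne, hE0free, hE0deg⟩ := lowerK4 n hn
  set T : Set ℕ := {d : ℕ | ∃ E : Finset (Finset (Fin n)),
    (∀ e ∈ E, e.card = 3) ∧ E.Nonempty ∧ ¬ Contains K4 E ∧ minPosCoDeg 3 n E = d} with hT
  have hco : coPlusEx 3 n K4 = sSup T := rfl
  have hmemT : minPosCoDeg 3 n E0 ∈ T := ⟨E0, hE03, hE0ne, hE0free, rfl⟩
  have hub : ∀ d ∈ T, 3 * d ≤ 2 * n := by
    rintro d ⟨E, h3, hne, hfree, rfl⟩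
    exact upperK4 n E h3 hne hfree
  have hbdd : BddAbove T := ⟨2 * n, fun d hd => by have := hub d hd; omega⟩
  have hTne : T.Nonempty := ⟨_, hmemT⟩
  have hge : minPosCoDeg 3 n E0 ≤ coPlusEx 3 n K4 := by
    rw [hco]; exact le_csSup hbdd hmemT
  have hle : coPlusEx 3 n K4 ≤ (2 * n) / 3 := by
    rw [hco]
    exact csSup_le hTne (fun d hd => by have := hub d hd; omega)
  have hlow : (n - 1) / 2 ≤ coPlusEx 3 n K4 := hE0deg.trans hge
  constructor
  · have h1 : (n : ℕ) ≤ 2 * coPlusEx 3 n K4 + 2 := by omega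
    have h2 : (n : ℝ) ≤ 2 * (coPlusEx 3 n K4 : ℝ) + 2 := by exact_mod_cast h1
    linarith
  · have h1 : 3 * coPlusEx 3 n K4 ≤ 2 * n := by omega
    have h2 : 3 * (coPlusEx 3 n K4 : ℝ) ≤ 2 * (n : ℝ) := by exact_mod_cast h1
    linarith
end

section
/- Let H be a 3-graph on n vertices with at least one edge, and let A be an independent set of vertices of H. Then δ₂⁺(H) ≤ n − |A|. -/
open Finset

/-!
If the minimum positive co-degree exceeded `n - |A|`, every `(r-1)`-set `S` lying in an edge
would extend to more than `n - |A|` edges `S ∪ {w}`, hence to one with `w ∈ A`. Applied to an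
edge `e` meeting `A` in as many vertices as possible, with `S = e \ {v}` for some `v ∈ e \ A`
(which exists as `A` is independent), this yields an edge meeting `A` in one more vertex.
-/

lemma coDeg_le_card_extensions {n r : ℕ} {E : Finset (Finset (Fin n))}
    (hcard : ∀ e ∈ E, e.card = r) {S : Finset (Fin n)} (hS : S.card + 1 = r) :
    coDeg E S ≤ #{w ∈ Sᶜ | insert w S ∈ E} := by
  refine card_le_card_of_surjOn (fun w => insert w S) ?_
  intro e he
  obtain ⟨he, hSe⟩ := mem_filter.1 he
  obtain ⟨w, hw⟩ : ∃ w, e \ S = {w} := by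
    rw [← card_eq_one, card_sdiff_of_subset hSe, hcard e he]
    omega
  have hwe : w ∈ e \ S := by simp [hw]
  have hins : insert w S = e := by
    rw [← sdiff_union_of_subset hSe, hw, insert_eq]
  refine ⟨w, ?_, hins⟩
  simp only [coe_filter, mem_compl, Set.mem_ofPred_eq, hins]
  exact ⟨(mem_sdiff.1 hwe).2, he⟩

lemma minPosCoDeg_le_coDeg {r n : ℕ} {E : Finset (Finset (Fin n))} {S e : Finset (Fin n)}
    (hS : S.card = r - 1) (he : e ∈ E) (hSe : S ⊆ e) : minPosCoDeg r n E ≤ coDeg E S :=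
  Nat.sInf_le ⟨S, hS, rfl, card_pos.2 ⟨e, mem_filter.2 ⟨he, hSe⟩⟩⟩

lemma exists_insert_mem_of_lt_minPosCoDeg {r n : ℕ} {E : Finset (Finset (Fin n))}
    (hcard : ∀ e ∈ E, e.card = r) {A : Finset (Fin n)} (hA : n - #A < minPosCoDeg r n E)
    {S e : Finset (Fin n)} (hS : S.card + 1 = r) (he : e ∈ E) (hSe : S ⊆ e) :
    ∃ a ∈ A, a ∉ S ∧ insert a S ∈ E := by
  by_contra! hnone
  have hsub : {w ∈ Sᶜ | insert w S ∈ E} ⊆ Aᶜ := by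
    intro w hw
    simp only [mem_filter, mem_compl] at hw ⊢
    exact fun hwA => hnone w hwA hw.1 hw.2
  have hcoDeg : coDeg E S ≤ n - #A := calc
    coDeg E S ≤ #{w ∈ Sᶜ | insert w S ∈ E} := coDeg_le_card_extensions hcard hS
    _ ≤ #Aᶜ := card_le_card hsub
    _ = n - #A := by rw [card_compl, Fintype.card_fin]
  have hmin := minPosCoDeg_le_coDeg (r := r) (by omega) he hSe
  omega

theorem minPosCoDeg_le_sub_card_of_independent {r n : ℕ} {E : Finset (Finset (Fin n))}
    (hcard : ∀ e ∈ E, e.card = r) (hne : E.Nonempty) {A : Finset (Fin n)}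
    (hA : ∀ e ∈ E, ¬ e ⊆ A) : minPosCoDeg r n E ≤ n - #A := by
  by_contra! hlt
  obtain ⟨e, he, hmax⟩ := exists_max_image E (fun e => #(e ∩ A)) hne
  obtain ⟨v, hve, hvA⟩ := not_subset.1 (hA e he)
  obtain ⟨a, haA, haS, hmem⟩ := exists_insert_mem_of_lt_minPosCoDeg hcard hlt
    (S := e.erase v) (by rw [card_erase_add_one hve, hcard e he]) he (erase_subset v e)
  have hae : a ∉ e := fun hae => haS (mem_erase.2 ⟨ne_of_mem_of_not_mem haA hvA, hae⟩)
  have hinter : insert a (e.erase v) ∩ A = insert a (e ∩ A) := by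
    rw [insert_inter_of_mem haA, erase_inter, erase_eq_of_notMem (by simp [hvA])]
  have hle := hmax _ hmem
  rw [hinter, card_insert_of_notMem (by simp [hae])] at hle
  omega

/-- If a 3-graph on `n` vertices with at least one edge has an independent set `A`
(no edge is contained in `A`), then its minimum positive co-degree is at most `n - |A|`. -/
theorem minPosCoDeg_le_of_independent (n : ℕ) (E : Finset (Finset (Fin n)))
    (hcard : ∀ e ∈ E, e.card = 3) (hne : E.Nonempty)
    (A : Finset (Fin n)) (hA : ∀ e ∈ E, ¬ e ⊆ A) :
    (minPosCoDeg 3 n E : ℝ) ≤ (n : ℝ) - A.card := by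
  have hAn : #A ≤ n := (card_le_univ A).trans_eq (Fintype.card_fin n)
  rw [← Nat.cast_sub hAn, Nat.cast_le]
  exact minPosCoDeg_le_sub_card_of_independent hcard hne hA
end

section
/- For every integer n ≥ 3, the positive co-degree Turán number of C₅⁻ satisfies ⌊n/3⌋ ≤ co⁺ex(n, C₅⁻) ≤ n/2. -/
open Finset

def Nbhd {n : ℕ} (E : Finset (Finset (Fin n))) (S : Finset (Fin n)) : Finset (Fin n) :=
  univ.filter (fun w => w ∉ S ∧ insert w S ∈ E)

lemma coDeg_eq_card {n : ℕ} (E : Finset (Finset (Fin n))) (hE : ∀ e ∈ E, e.card = 3)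
    (S : Finset (Fin n)) (hS : S.card = 2) :
    coDeg E S = (Nbhd E S).card := by
  have hfe : E.filter (fun e => S ⊆ e) = (Nbhd E S).image (fun w => insert w S) := by
    ext e
    simp only [mem_filter, mem_image, Nbhd, mem_univ, true_and]
    constructor
    · rintro ⟨heE, hSe⟩
      have h1 : (e \ S).card = 1 := by rw [card_sdiff_of_subset hSe, hE e heE, hS]
      obtain ⟨w, hw⟩ := card_eq_one.mp h1
      have hwm : w ∈ e \ S := hw ▸ mem_singleton_self w
      have hins : insert w S = e := by
        have h2 : e \ S ∪ S = e := sdiff_union_of_subset hSe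
        rw [hw] at h2
        rw [← h2, insert_eq]
      exact ⟨w, ⟨(mem_sdiff.mp hwm).2, hins ▸ heE⟩, hins⟩
    · rintro ⟨w, ⟨hws, hwE⟩, rfl⟩
      exact ⟨hwE, subset_insert _ _⟩
  rw [coDeg, hfe, card_image_of_injOn]
  intro w hw w' hw' h
  simp only [Nbhd, mem_coe, mem_filter, mem_univ, true_and] at hw hw'
  have h2 : insert w S = insert w' S := h
  have : w ∈ insert w' S := h2 ▸ mem_insert_self w S
  rcases mem_insert.mp this with h' | h'
  · exact h'
  · exact absurd h' hw.1

set_option maxRecDepth 10000 in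
lemma no5 : ∀ g : Fin 5 → Fin 3, ¬ (∀ e ∈ C5minus, (e.image g).card = 3) := by decide

lemma inj5 {α : Type*} (z x y w u : α) (hxy : x ≠ y) (hxz : x ≠ z) (hyz : y ≠ z)
    (hwx : w ≠ x) (hwy : w ≠ y) (hwz : w ≠ z)
    (hux : u ≠ x) (huy : u ≠ y) (huz : u ≠ z) (huw : u ≠ w) :
    Function.Injective ![z, x, y, w, u] := by
  intro a b hab
  fin_cases a <;> fin_cases b <;> simp_all


set_option maxHeartbeats 1000000 in
lemma upper {n : ℕ} (hn : 3 ≤ n) (E : Finset (Finset (Fin n)))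
    (hE : ∀ e ∈ E, e.card = 3) (hne : E.Nonempty) (hfree : ¬ Contains C5minus E) :
    2 * minPosCoDeg 3 n E ≤ n := by
  by_contra hcon
  push_neg at hcon
  set δ := minPosCoDeg 3 n E with hδ
  have key : ∀ S : Finset (Fin n), S.card = 2 → 0 < coDeg E S → δ ≤ (Nbhd E S).card := by
    intro S h1 h2
    rw [← coDeg_eq_card E hE S h1]
    exact Nat.sInf_le ⟨S, h1, rfl, h2⟩
  have inter : ∀ S T : Finset (Fin n), S.card = 2 → T.card = 2 →
      0 < coDeg E S → 0 < coDeg E T → ∀ x : Fin n, x ∈ S → x ∈ T →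
      2 ≤ ((Nbhd E S) ∩ (Nbhd E T)).card := by
    intro S T hS hT hpS hpT x hxS hxT
    have h1 := key S hS hpS
    have h2 := key T hT hpT
    have hsub : Nbhd E S ∪ Nbhd E T ⊆ univ.erase x := by
      intro w hw
      refine mem_erase.mpr ⟨?_, mem_univ w⟩
      rintro rfl
      rcases mem_union.mp hw with h | h <;>
        simp only [Nbhd, mem_filter, mem_univ, true_and] at h
      · exact h.1 hxS
      · exact h.1 hxT
    have h3 : (Nbhd E S ∪ Nbhd E T).card ≤ n - 1 := by
      refine le_trans (card_le_card hsub) ?_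
      rw [card_erase_of_mem (mem_univ x), card_univ, Fintype.card_fin]
    have h4 := Finset.card_union_add_card_inter (Nbhd E S) (Nbhd E T)
    omega
  -- get the starting edge
  obtain ⟨e₀, he₀⟩ := hne
  obtain ⟨x, y, z, hxy, hxz, hyz, he⟩ := Finset.card_eq_three.mp (hE e₀ he₀)
  subst he
  have hmemE : ({x, y, z} : Finset (Fin n)) ∈ E := he₀
  -- positive codegree facts
  have hposxy : 0 < coDeg E ({x, y} : Finset (Fin n)) := by
    refine card_pos.mpr ⟨{x, y, z}, mem_filter.mpr ⟨hmemE, ?_⟩⟩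
    intro a ha; simp only [mem_insert, mem_singleton] at ha ⊢; tauto
  have hposxz : 0 < coDeg E ({x, z} : Finset (Fin n)) := by
    refine card_pos.mpr ⟨{x, y, z}, mem_filter.mpr ⟨hmemE, ?_⟩⟩
    intro a ha; simp only [mem_insert, mem_singleton] at ha ⊢; tauto
  have hcxy : ({x, y} : Finset (Fin n)).card = 2 := card_pair hxy
  have hcxz : ({x, z} : Finset (Fin n)).card = 2 := card_pair hxz
  -- find w
  have hi1 : 2 ≤ ((Nbhd E {x, y}) ∩ (Nbhd E {x, z})).card :=
    inter _ _ hcxy hcxz hposxy hposxz x (mem_insert_self x _) (mem_insert_self x _)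
  obtain ⟨w, hw⟩ := card_pos.mp (by omega : 0 < ((Nbhd E {x, y}) ∩ (Nbhd E {x, z})).card)
  rw [mem_inter] at hw
  have hw1 := hw.1; have hw2 := hw.2
  simp only [Nbhd, mem_filter, mem_univ, true_and, mem_insert, mem_singleton, not_or] at hw1 hw2
  obtain ⟨⟨hwx, hwy⟩, hEwxy⟩ := hw1
  obtain ⟨⟨_, hwz⟩, hEwxz⟩ := hw2
  -- pairs {y,w} and {z,w}
  have hcyw : ({y, w} : Finset (Fin n)).card = 2 := card_pair (fun h => hwy h.symm)
  have hczw : ({z, w} : Finset (Fin n)).card = 2 := card_pair (fun h => hwz h.symm)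
  have hposyw : 0 < coDeg E ({y, w} : Finset (Fin n)) := by
    refine card_pos.mpr ⟨insert w {x, y}, mem_filter.mpr ⟨hEwxy, ?_⟩⟩
    intro a ha; simp only [mem_insert, mem_singleton] at ha ⊢; tauto
  have hposzw : 0 < coDeg E ({z, w} : Finset (Fin n)) := by
    refine card_pos.mpr ⟨insert w {x, z}, mem_filter.mpr ⟨hEwxz, ?_⟩⟩
    intro a ha; simp only [mem_insert, mem_singleton] at ha ⊢; tauto
  have hi2 : 2 ≤ ((Nbhd E {y, w}) ∩ (Nbhd E {z, w})).card :=
    inter _ _ hcyw hczw hposyw hposzw w (by simp) (by simp)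
  have hi3 : 0 < (((Nbhd E {y, w}) ∩ (Nbhd E {z, w})).erase x).card := by
    have := Finset.card_erase_of_mem (a := x) (s := (Nbhd E {y, w}) ∩ (Nbhd E {z, w}))
    rcases Decidable.em (x ∈ (Nbhd E {y, w}) ∩ (Nbhd E {z, w})) with h | h
    · rw [this h]; omega
    · rw [Finset.erase_eq_of_notMem h]; omega
  obtain ⟨u, hu⟩ := card_pos.mp hi3
  rw [mem_erase, mem_inter] at hu
  obtain ⟨hux, hu1, hu2⟩ := hu
  simp only [Nbhd, mem_filter, mem_univ, true_and, mem_insert, mem_singleton, not_or] at hu1 hu2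
  obtain ⟨⟨huy, huw⟩, hEuyw⟩ := hu1
  obtain ⟨⟨huz, _⟩, hEuzw⟩ := hu2
  -- build the copy of C5minus
  apply hfree
  refine ⟨![z, x, y, w, u], ?_, ?_⟩
  · exact inj5 z x y w u hxy hxz hyz hwx hwy hwz hux huy huz huw
  · intro e he
    simp only [C5minus, mem_insert, mem_singleton] at he
    have simpler : ∀ (e : Finset (Fin 5)) (t : Finset (Fin n)),
        e.image ![z, x, y, w, u] = t → e.image ![z, x, y, w, u] ∈ E ∨ True := fun _ _ _ => Or.inr trivial
    rcases he with rfl | rfl | rfl | rfl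
    · have h1 : ({0, 1, 2} : Finset (Fin 5)).image ![z, x, y, w, u] = {z, x, y} := by
        simp only [Finset.image_insert, Finset.image_singleton, Matrix.cons_val_zero,
          Matrix.cons_val_one, Matrix.cons_val_two, Matrix.cons_val_three, Matrix.cons_val_four,
          Matrix.head_cons, Matrix.tail_cons, Matrix.head_fin_const]
      have h2 : ({z, x, y} : Finset (Fin n)) = {x, y, z} := by ext a; simp; tauto
      rw [h1, h2]; exact hmemE
    · have h1 : ({1, 2, 3} : Finset (Fin 5)).image ![z, x, y, w, u] = {x, y, w} := by
        simp only [Finset.image_insert, Finset.image_singleton, Matrix.cons_val_zero,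
          Matrix.cons_val_one, Matrix.cons_val_two, Matrix.cons_val_three, Matrix.cons_val_four,
          Matrix.head_cons, Matrix.tail_cons, Matrix.head_fin_const]
      have h2 : ({x, y, w} : Finset (Fin n)) = insert w {x, y} := by ext a; simp; tauto
      rw [h1, h2]; exact hEwxy
    · have h1 : ({2, 3, 4} : Finset (Fin 5)).image ![z, x, y, w, u] = {y, w, u} := by
        simp only [Finset.image_insert, Finset.image_singleton, Matrix.cons_val_zero,
          Matrix.cons_val_one, Matrix.cons_val_two, Matrix.cons_val_three, Matrix.cons_val_four,
          Matrix.head_cons, Matrix.tail_cons, Matrix.head_fin_const]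
      have h2 : ({y, w, u} : Finset (Fin n)) = insert u {y, w} := by ext a; simp; tauto
      rw [h1, h2]; exact hEuyw
    · have h1 : ({0, 3, 4} : Finset (Fin 5)).image ![z, x, y, w, u] = {z, w, u} := by
        simp only [Finset.image_insert, Finset.image_singleton, Matrix.cons_val_zero,
          Matrix.cons_val_one, Matrix.cons_val_two, Matrix.cons_val_three, Matrix.cons_val_four,
          Matrix.head_cons, Matrix.tail_cons, Matrix.head_fin_const]
      have h2 : ({z, w, u} : Finset (Fin n)) = insert u {z, w} := by ext a; simp; tauto
      rw [h1, h2]; exact hEuzw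


set_option maxHeartbeats 1000000 in
lemma lower {n : ℕ} (hn : 3 ≤ n) :
    ∃ E : Finset (Finset (Fin n)), (∀ e ∈ E, e.card = 3) ∧ E.Nonempty ∧
      ¬ Contains C5minus E ∧ n / 3 ≤ minPosCoDeg 3 n E := by
  set color : Fin n → Fin 3 := fun v => ⟨v.val % 3, Nat.mod_lt _ (by omega)⟩ with hcolor
  set E : Finset (Finset (Fin n)) :=
    (univ.powersetCard 3).filter (fun e => (e.image color).card = 3) with hEdef
  have hE : ∀ e ∈ E, e.card = 3 := by
    intro e he
    exact (Finset.mem_powersetCard_univ.mp (mem_filter.mp he).1)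
  -- the basic triangle
  have h01 : (⟨0, by omega⟩ : Fin n) ≠ ⟨1, by omega⟩ := by simp [Fin.ext_iff]
  have h02 : (⟨0, by omega⟩ : Fin n) ≠ ⟨2, by omega⟩ := by simp [Fin.ext_iff]
  have h12 : (⟨1, by omega⟩ : Fin n) ≠ ⟨2, by omega⟩ := by simp [Fin.ext_iff]
  have htri : ({⟨0, by omega⟩, ⟨1, by omega⟩, ⟨2, by omega⟩} : Finset (Fin n)) ∈ E := by
    refine mem_filter.mpr ⟨Finset.mem_powersetCard_univ.mpr ?_, ?_⟩
    · rw [card_insert_of_notMem (by simp [h01, h02]), card_insert_of_notMem (by simp [h12]),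
        card_singleton]
    · have : ({⟨0, by omega⟩, ⟨1, by omega⟩, ⟨2, by omega⟩} : Finset (Fin n)).image color
          = {⟨0, by omega⟩, ⟨1, by omega⟩, ⟨2, by omega⟩} := by
        simp only [Finset.image_insert, Finset.image_singleton]
        congr 1 <;> simp [hcolor, Fin.ext_iff]
      rw [this, card_insert_of_notMem (by simp [Fin.ext_iff]),
        card_insert_of_notMem (by simp [Fin.ext_iff]), card_singleton]
  -- class sizes
  have hclass : ∀ c : Fin 3, n / 3 ≤ (univ.filter (fun v : Fin n => color v = c)).card := by
    intro c
    have hmul : n / 3 * 3 ≤ n := Nat.div_mul_le_self n 3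
    have himg : ((Finset.range (n / 3)).image
        (fun j => (⟨(3 * j + c.val) % n, Nat.mod_lt _ (by omega)⟩ : Fin n)))
        ⊆ univ.filter (fun v : Fin n => color v = c) := by
      intro v hv
      obtain ⟨j, hj, rfl⟩ := Finset.mem_image.mp hv
      rw [Finset.mem_range] at hj
      have hlt : 3 * j + c.val < n := by
        have := c.isLt
        omega
      simp only [mem_filter, mem_univ, true_and, hcolor, Fin.ext_iff]
      rw [Nat.mod_eq_of_lt hlt]
      omega
    have hinj : Set.InjOn (fun j => (⟨(3 * j + c.val) % n, Nat.mod_lt _ (by omega)⟩ : Fin n))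
        (Finset.range (n / 3)) := by
      intro j hj k hk h
      rw [Finset.coe_range, Set.mem_Iio] at hj hk
      have hj' : 3 * j + c.val < n := by have := c.isLt; omega
      have hk' : 3 * k + c.val < n := by have := c.isLt; omega
      simp only [Fin.mk.injEq, Nat.mod_eq_of_lt hj', Nat.mod_eq_of_lt hk'] at h
      omega
    calc n / 3 = (Finset.range (n / 3)).card := (Finset.card_range _).symm
      _ = _ := (Finset.card_image_of_injOn hinj).symm
      _ ≤ _ := card_le_card himg
  refine ⟨E, hE, ⟨_, htri⟩, ?_, ?_⟩
  · rintro ⟨f, hinj, hmap⟩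
    apply no5 (color ∘ f)
    intro e he
    have h := hmap e he
    have h2 := (mem_filter.mp h).2
    rwa [Finset.image_image] at h2
  · rw [minPosCoDeg]
    apply le_csInf
    · refine ⟨coDeg E {⟨0, by omega⟩, ⟨1, by omega⟩}, {⟨0, by omega⟩, ⟨1, by omega⟩},
        card_pair h01, rfl, ?_⟩
      refine card_pos.mpr ⟨_, mem_filter.mpr ⟨htri, ?_⟩⟩
      intro a ha
      simp only [mem_insert, mem_singleton] at ha ⊢
      tauto
    · rintro d ⟨S, hS2, rfl, hpos⟩
      obtain ⟨a, b, hab, rfl⟩ := Finset.card_eq_two.mp hS2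
      -- there is an edge containing {a,b}, so colors differ
      obtain ⟨e, he⟩ := card_pos.mp hpos
      rw [mem_filter] at he
      obtain ⟨heE, hsub⟩ := he
      have hrain : Set.InjOn color e := Finset.card_image_iff.mp
        (by rw [(mem_filter.mp heE).2, hE e heE])
      have hcab : color a ≠ color b := by
        intro h
        exact hab (hrain (hsub (by simp)) (hsub (by simp)) h)
      obtain ⟨c, hca, hcb⟩ : ∃ c : Fin 3, c ≠ color a ∧ c ≠ color b := by
        revert hcab
        generalize color a = p
        generalize color b = q
        revert p q
        decide
      -- the class of c is contained in the neighborhood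
      have hsubN : univ.filter (fun v : Fin n => color v = c) ⊆ Nbhd E {a, b} := by
        intro w hw
        rw [mem_filter] at hw
        have hwc : color w = c := hw.2
        have hwa : w ≠ a := fun h => hca (by rw [← hwc, h])
        have hwb : w ≠ b := fun h => hcb (by rw [← hwc, h])
        have hwS : w ∉ ({a, b} : Finset (Fin n)) := by simp [hwa, hwb]
        rw [Nbhd, mem_filter]
        refine ⟨mem_univ w, hwS, ?_⟩
        refine mem_filter.mpr ⟨Finset.mem_powersetCard_univ.mpr ?_, ?_⟩
        · rw [card_insert_of_notMem hwS, card_pair hab]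
        · have himg2 : (insert w ({a, b} : Finset (Fin n))).image color
              = insert c {color a, color b} := by
            simp only [Finset.image_insert, Finset.image_singleton, hwc]
          rw [himg2, card_insert_of_notMem (by simp [hca, hcb]),
            card_insert_of_notMem (by simp [hcab]), card_singleton]
      rw [coDeg_eq_card E hE _ hS2]
      exact le_trans (hclass c) (card_le_card hsubN)


set_option maxHeartbeats 400000 in
/-- For every `n ≥ 3`, `⌊n/3⌋ ≤ co⁺ex(n, C₅⁻) ≤ n/2`. -/
theorem coPlusEx_C5minus (n : ℕ) (hn : 3 ≤ n) :
    n / 3 ≤ coPlusEx 3 n C5minus ∧ (coPlusEx 3 n C5minus : ℝ) ≤ n / 2 := by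
  obtain ⟨E₀, h1, h2, h3, h4⟩ := lower hn
  have hco : coPlusEx 3 n C5minus = sSup {d : ℕ | ∃ E : Finset (Finset (Fin n)),
      (∀ e ∈ E, e.card = 3) ∧ E.Nonempty ∧ ¬ Contains C5minus E ∧ minPosCoDeg 3 n E = d} := rfl
  have hmem : minPosCoDeg 3 n E₀ ∈ {d : ℕ | ∃ E : Finset (Finset (Fin n)),
      (∀ e ∈ E, e.card = 3) ∧ E.Nonempty ∧ ¬ Contains C5minus E ∧ minPosCoDeg 3 n E = d} :=
    ⟨E₀, h1, h2, h3, rfl⟩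
  have hub : ∀ d ∈ {d : ℕ | ∃ E : Finset (Finset (Fin n)),
      (∀ e ∈ E, e.card = 3) ∧ E.Nonempty ∧ ¬ Contains C5minus E ∧ minPosCoDeg 3 n E = d},
      2 * d ≤ n := by
    rintro d ⟨E, hE, hne, hfree, rfl⟩
    exact upper hn E hE hne hfree
  have hbdd : BddAbove {d : ℕ | ∃ E : Finset (Finset (Fin n)),
      (∀ e ∈ E, e.card = 3) ∧ E.Nonempty ∧ ¬ Contains C5minus E ∧ minPosCoDeg 3 n E = d} :=
    ⟨n, fun d hd => by have := hub d hd; omega⟩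
  have hsup : 2 * coPlusEx 3 n C5minus ≤ n := by
    rw [hco]
    exact hub _ (Nat.sSup_mem ⟨_, hmem⟩ hbdd)
  constructor
  · rw [hco]
    exact le_trans h4 (le_csSup hbdd hmem)
  · have h5 : (2 : ℝ) * (coPlusEx 3 n C5minus : ℝ) ≤ (n : ℝ) := by exact_mod_cast hsup
    linarith
end

section
/- There exists a constant C > 0 such that for every integer n ≥ 3, the positive co-degree Turán number of K₂,₂,₂ satisfies co⁺ex(n, K₂,₂,₂) ≤ C·n^{5/6}. -/
open Finset

/-!
Let `d` be the minimum positive co-degree of a `K₂,₂,₂`-free 3-graph on `n` vertices. In the link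
graph of a non-isolated vertex `a`, some vertex has degree at least `d` and so do all of its
neighbours, hence `∑_b deg(b)² ≥ d³`; by Cauchy–Schwarz over pairs `(c, c')` of common
neighbours, the link contains at least `d⁶/n² - 2n³` four-cycles `b c b' c'`. Two distinct
vertices whose links share a four-cycle span a `K₂,₂,₂`, so the four-cycle sets of the links of
the `s ≤ n` non-isolated vertices are disjoint subsets of `s⁴` tuples, and some link has at most
`s³ ≤ n³` of them. Hence `d⁶ ≤ 3n⁵`.
-/

theorem card_filter_sq {δ : Type*} [Fintype δ] (p : δ → Prop) [DecidablePred p] :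
    #{x | p x} ^ 2 = #{x : δ × δ | p x.1 ∧ p x.2} := by
  rw [sq, ← card_product, ← filter_product, univ_product_univ]

section FourCycles
variable {β γ : Type*} [Fintype β] [Fintype γ] (r : β → γ → Prop) [DecidableRel r]

def c4Homs : Finset ((β × β) × (γ × γ)) :=
  {p | r p.1.1 p.2.1 ∧ r p.1.1 p.2.2 ∧ r p.1.2 p.2.1 ∧ r p.1.2 p.2.2}

@[simp]
theorem mem_c4Homs {p : (β × β) × (γ × γ)} :
    p ∈ c4Homs r ↔ r p.1.1 p.2.1 ∧ r p.1.1 p.2.2 ∧ r p.1.2 p.2.1 ∧ r p.1.2 p.2.2 := by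
  simp [c4Homs]

theorem sum_sq_card_eq_sum_card_common :
    ∑ b, #{c | r b c} ^ 2 = ∑ q : γ × γ, #{b | r b q.1 ∧ r b q.2} := by
  simp_rw [card_filter_sq, card_filter]
  exact sum_comm

theorem card_c4Homs_eq_sum_sq :
    #(c4Homs r) = ∑ q : γ × γ, #{b | r b q.1 ∧ r b q.2} ^ 2 := by
  simp only [card_filter_sq]
  rw [c4Homs, card_filter, Fintype.sum_prod_type_right]
  simp only [card_filter, and_assoc]

def c4Copies [DecidableEq β] [DecidableEq γ] : Finset ((β × β) × (γ × γ)) :=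
  {p ∈ c4Homs r | p.1.1 ≠ p.1.2 ∧ p.2.1 ≠ p.2.2}

@[simp]
theorem mem_c4Copies [DecidableEq β] [DecidableEq γ] {p : (β × β) × (γ × γ)} :
    p ∈ c4Copies r ↔ p ∈ c4Homs r ∧ p.1.1 ≠ p.1.2 ∧ p.2.1 ≠ p.2.2 :=
  mem_filter

theorem card_c4Homs_le [DecidableEq β] [DecidableEq γ] :
    #(c4Homs r) ≤ #(c4Copies r) + Fintype.card β * Fintype.card γ ^ 2 +
      Fintype.card β ^ 2 * Fintype.card γ := by
  set diagB := univ.image fun x : β × γ × γ => ((x.1, x.1), x.2)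
  set diagC := univ.image fun x : (β × β) × γ => (x.1, (x.2, x.2))
  have hcover : c4Homs r ⊆ c4Copies r ∪ diagB ∪ diagC := by
    rintro ⟨⟨b, b'⟩, c, c'⟩ hp
    by_cases hb : b = b'
    · subst hb; simp [diagB]
    by_cases hc : c = c'
    · subst hc; simp [diagC]
    exact mem_union_left _ (mem_union_left _ (mem_c4Copies r |>.2 ⟨hp, hb, hc⟩))
  calc #(c4Homs r) ≤ #(c4Copies r) + #diagB + #diagC :=
        (card_le_card hcover).trans <|
          (card_union_le _ _).trans <| by gcongr; exact card_union_le _ _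
    _ ≤ _ := by gcongr <;> exact card_image_le.trans (by simp [sq])

theorem sq_sum_sq_card_le :
    (∑ b, #{c | r b c} ^ 2) ^ 2 ≤ Fintype.card γ ^ 2 * #(c4Homs r) := by
  rw [sum_sq_card_eq_sum_card_common, card_c4Homs_eq_sum_sq]
  simpa [sq] using
    sq_sum_le_card_mul_sum_sq (s := univ) (f := fun q : γ × γ => #{b | r b q.1 ∧ r b q.2})

end FourCycles

theorem pow_three_le_sum_sq_card {α : Type*} [Fintype α] {r : α → α → Prop} [DecidableRel r]
    (hr : ∀ b c, r b c → r c b) {d : ℕ} (hd : ∀ b, 0 < #{c | r b c} → d ≤ #{c | r b c})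
    {b₀ c₀ : α} (h : r b₀ c₀) : d ^ 3 ≤ ∑ b, #{c | r b c} ^ 2 := by
  have hnbhd : d ≤ #{c | r b₀ c} := hd b₀ (card_pos.2 ⟨c₀, by simpa using h⟩)
  have hdeg : ∀ c ∈ ({c | r b₀ c} : Finset α), d ^ 2 ≤ #{c' | r c c'} ^ 2 := fun c hc =>
    Nat.pow_le_pow_left (hd c (card_pos.2 ⟨b₀, by simpa using hr _ _ (mem_filter.1 hc).2⟩)) 2
  calc d ^ 3 = d * d ^ 2 := by ring
    _ ≤ #{c | r b₀ c} * d ^ 2 := Nat.mul_le_mul_right _ hnbhd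
    _ ≤ ∑ c ∈ {c | r b₀ c}, #{c' | r c c'} ^ 2 := card_nsmul_le_sum _ _ _ hdeg
    _ ≤ ∑ b, #{c | r b c} ^ 2 := sum_le_sum_of_subset (subset_univ _)

section Link
variable {α : Type*} [DecidableEq α] {E : Finset (Finset α)}

def link (E : Finset (Finset α)) (a b c : α) : Prop := {a, b, c} ∈ E

instance (E : Finset (Finset α)) (a : α) : DecidableRel (link E a) :=
  fun b c => inferInstanceAs (Decidable ({a, b, c} ∈ E))

theorem link_symm {a b c : α} (h : link E a b c) : link E a c b := by
  rwa [link, pair_comm]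

theorem link_distinct (h3 : ∀ e ∈ E, #e = 3) {a b c : α} (h : link E a b c) :
    a ≠ b ∧ a ≠ c ∧ b ≠ c :=
  card_triple_eq_three_iff.1 (h3 _ h)

theorem exists_link_of_mem_biUnion (h3 : ∀ e ∈ E, #e = 3) {a : α} (ha : a ∈ E.biUnion id) :
    ∃ b c, link E a b c := by
  obtain ⟨e, he, hae : a ∈ e⟩ := mem_biUnion.1 ha
  have hcard : #(e.erase a) = 2 := by rw [card_erase_of_mem hae, h3 e he]
  obtain ⟨b, c, -, hbc⟩ := card_eq_two.1 hcard
  exact ⟨b, c, by rwa [link, ← hbc, insert_erase hae]⟩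

theorem c4Copies_link_subset [Fintype α] (a : α) :
    c4Copies (link E a) ⊆ (E.biUnion id ×ˢ E.biUnion id) ×ˢ (E.biUnion id ×ˢ E.biUnion id) := by
  rintro ⟨⟨b, b'⟩, c, c'⟩ hp
  simp only [mem_c4Copies, mem_c4Homs] at hp
  obtain ⟨⟨hbc, -, -, hb'c'⟩, -⟩ := hp
  simp only [mem_product, mem_biUnion, id]
  exact ⟨⟨⟨_, hbc, by simp⟩, ⟨_, hb'c', by simp⟩⟩, ⟨_, hbc, by simp⟩, ⟨_, hb'c', by simp⟩⟩

theorem contains_K222_of_mem_c4Copies_link [Fintype α] (h3 : ∀ e ∈ E, #e = 3) {a a' : α}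
    (haa' : a ≠ a') {p : (α × α) × (α × α)} (hp : p ∈ c4Copies (link E a))
    (hp' : p ∈ c4Copies (link E a')) :
    Contains K222 E := by
  obtain ⟨⟨b, b'⟩, c, c'⟩ := p
  simp only [mem_c4Copies, mem_c4Homs] at hp hp'
  obtain ⟨⟨e1, e2, e3, e4⟩, hbb', hcc'⟩ := hp
  obtain ⟨⟨e5, e6, e7, e8⟩, -⟩ := hp'
  obtain ⟨hab, hac, hbc⟩ := link_distinct h3 e1
  obtain ⟨hab', hac', hb'c'⟩ := link_distinct h3 e4
  obtain ⟨ha'b, ha'c', hbc'⟩ := link_distinct h3 e6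
  obtain ⟨ha'b', ha'c, hb'c⟩ := link_distinct h3 e7
  refine ⟨![a, a', b, b', c, c'], ?_, ?_⟩
  · simp [Function.Injective, Fin.forall_fin_succ, *, Ne.symm]
  · simp_all [K222, link]

theorem sum_card_c4Copies_link_le [Fintype α] (h3 : ∀ e ∈ E, #e = 3)
    (hfree : ¬ Contains K222 E) :
    ∑ a ∈ E.biUnion id, #(c4Copies (link E a)) ≤ #(E.biUnion id) ^ 4 := by
  have hdisj : (E.biUnion id : Set α).PairwiseDisjoint fun a => c4Copies (link E a) :=
    fun a _ a' _ haa' => disjoint_left.2 fun p hp hp' =>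
      hfree (contains_K222_of_mem_c4Copies_link h3 haa' hp hp')
  rw [← card_biUnion hdisj]
  calc _ ≤ #((E.biUnion id ×ˢ E.biUnion id) ×ˢ (E.biUnion id ×ˢ E.biUnion id)) :=
        card_le_card (biUnion_subset.2 fun a _ => c4Copies_link_subset a)
    _ = #(E.biUnion id) ^ 4 := by simp only [card_product]; ring

end Link

theorem pow_six_le_of_K222_free {α : Type*} [Fintype α] [DecidableEq α] {E : Finset (Finset α)}
    (h3 : ∀ e ∈ E, #e = 3) (hne : E.Nonempty) (hfree : ¬ Contains K222 E) {d : ℕ}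
    (hd : ∀ a b, 0 < #{c | link E a b c} → d ≤ #{c | link E a b c}) :
    d ^ 6 ≤ 3 * Fintype.card α ^ 5 := by
  set U := E.biUnion id
  set n := Fintype.card α
  have hU : U.Nonempty := by
    obtain ⟨e, he⟩ := hne
    obtain ⟨v, hv⟩ := card_pos.1 (by rw [h3 e he]; norm_num : 0 < #e)
    exact ⟨v, mem_biUnion.2 ⟨e, he, hv⟩⟩
  obtain ⟨a, haU, hcopies⟩ : ∃ a ∈ U, #(c4Copies (link E a)) ≤ #U ^ 3 := by
    refine exists_le_of_sum_le hU ?_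
    rw [sum_const, smul_eq_mul, ← pow_succ']
    exact sum_card_c4Copies_link_le h3 hfree
  obtain ⟨b₀, c₀, h⟩ := exists_link_of_mem_biUnion h3 haU
  have hUn : #U ≤ n := card_le_univ U
  calc d ^ 6 = (d ^ 3) ^ 2 := by ring
    _ ≤ (∑ b, #{c | link E a b c} ^ 2) ^ 2 :=
        Nat.pow_le_pow_left (pow_three_le_sum_sq_card (fun _ _ => link_symm) (hd a) h) 2
    _ ≤ n ^ 2 * #(c4Homs (link E a)) := sq_sum_sq_card_le _
    _ ≤ n ^ 2 * (#(c4Copies (link E a)) + n * n ^ 2 + n ^ 2 * n) := by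
        gcongr; exact card_c4Homs_le _
    _ ≤ n ^ 2 * (n ^ 3 + n * n ^ 2 + n ^ 2 * n) := by
        gcongr; exact hcopies.trans (Nat.pow_le_pow_left hUn 3)
    _ = 3 * n ^ 5 := by ring

section FinHypergraph
variable {n : ℕ} {E : Finset (Finset (Fin n))}

theorem coDeg_pair_le_card_link (h3 : ∀ e ∈ E, #e = 3) {a b : Fin n} (hab : a ≠ b) :
    coDeg E {a, b} ≤ #{c | link E a b c} := by
  refine (card_le_card fun e he => ?_).trans (card_image_le (f := fun c => {a, b, c}))
  obtain ⟨heE, hsub⟩ := mem_filter.1 he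
  obtain ⟨c, -, rfl⟩ := exists_eq_insert_iff.2 ⟨hsub, by rw [card_pair hab, h3 e heE]⟩
  have hc : insert c {a, b} = ({a, b, c} : Finset (Fin n)) := by rw [insert_comm, pair_comm]
  exact mem_image.2 ⟨c, mem_filter.2 ⟨mem_univ c, by rwa [hc] at heE⟩, hc.symm⟩

theorem minPosCoDeg_le_card_link (h3 : ∀ e ∈ E, #e = 3) {a b : Fin n}
    (h : 0 < #{c | link E a b c}) : minPosCoDeg 3 n E ≤ #{c | link E a b c} := by
  obtain ⟨c, hc⟩ := card_pos.1 h
  have habc : link E a b c := (mem_filter.1 hc).2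
  obtain ⟨hab, -, -⟩ := link_distinct h3 habc
  have hpos : 0 < coDeg E {a, b} :=
    card_pos.2 ⟨_, mem_filter.2 ⟨habc, insert_subset_insert a (by simp)⟩⟩
  have hmin : minPosCoDeg 3 n E ≤ coDeg E {a, b} :=
    Nat.sInf_le ⟨{a, b}, card_pair hab, rfl, hpos⟩
  exact hmin.trans (coDeg_pair_le_card_link h3 hab)

end FinHypergraph

theorem coPlusEx_le_of_forall_minPosCoDeg_le {α : Type*} [DecidableEq α] {r n : ℕ}
    {F : Finset (Finset α)} {B : ℝ} (hB : 0 ≤ B)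
    (h : ∀ E : Finset (Finset (Fin n)), (∀ e ∈ E, #e = r) → E.Nonempty → ¬ Contains F E →
      (minPosCoDeg r n E : ℝ) ≤ B) :
    (coPlusEx r n F : ℝ) ≤ B := by
  have hfloor : coPlusEx r n F ≤ ⌊B⌋₊ :=
    csSup_le' fun d ⟨E, hr, hne, hF, hd⟩ => hd ▸ Nat.le_floor (h E hr hne hF)
  exact (Nat.cast_le.2 hfloor).trans (Nat.floor_le hB)

theorem le_two_mul_rpow_of_pow_six_le {x y : ℝ} (hx : 0 ≤ x) (hy : 0 ≤ y)
    (h : x ^ 6 ≤ 3 * y ^ 5) : x ≤ 2 * y ^ ((5 : ℝ) / 6) := by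
  have hpow : (2 * y ^ ((5 : ℝ) / 6)) ^ 6 = 64 * y ^ 5 := by
    rw [mul_pow, ← Real.rpow_natCast (y ^ _), ← Real.rpow_mul hy]
    norm_num
  refine (pow_le_pow_iff_left₀ hx (by positivity) (by norm_num : 6 ≠ 0)).1 ?_
  rw [hpow]
  nlinarith [pow_nonneg hy 5]

/-- There is a constant `C > 0` with `co⁺ex(n, K₂,₂,₂) ≤ C·n^(5/6)` for all `n ≥ 3`. -/
theorem coPlusEx_K222_upper :
    ∃ C : ℝ, 0 < C ∧ ∀ n : ℕ, 3 ≤ n →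
      (coPlusEx 3 n K222 : ℝ) ≤ C * (n : ℝ) ^ ((5 : ℝ) / 6) := by
  refine ⟨2, two_pos, fun n _ =>
    coPlusEx_le_of_forall_minPosCoDeg_le (by positivity) fun E h3 hne hfree => ?_⟩
  have key := pow_six_le_of_K222_free h3 hne hfree fun a b => minPosCoDeg_le_card_link h3
  rw [Fintype.card_fin] at key
  exact le_two_mul_rpow_of_pow_six_le (Nat.cast_nonneg _) (Nat.cast_nonneg _)
    (by exact_mod_cast key)
end

section
/- There exist a constant c > 0 and an integer N such that for every n ≥ N, the positive co-degree Turán number of K₂,₂,₂ satisfies co⁺ex(n, K₂,₂,₂) ≥ c·n^{1/2}. -/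
open Finset

/-!
For a prime `p` with `p² ≤ n`, take as vertices `(ℤ/p)²` and as edges the triples whose sum lies
on the parabola `A = {(x, x²)}`, a Sidon set. A pair `{a, b}` lies in the edge `{a, b, s - a - b}`
for every `s ∈ A` except at most two, so all co-degrees are at least `p - 2`. A copy of `K₂,₂,₂`
with parts `{x₀, x₁}, {x₂, x₃}, {x₄, x₅}` would give
`(x₀ + x₂ + x₄) + (x₁ + x₃ + x₄) = (x₁ + x₂ + x₄) + (x₀ + x₃ + x₄)` with all four sums in `A`,
which the Sidon property forbids. Bertrand's postulate provides such a `p` of order `√n`.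
-/

lemma minPosCoDeg_le_coPlusEx {α : Type*} [DecidableEq α] {r n : ℕ} {F : Finset (Finset α)}
    {E : Finset (Finset (Fin n))} (hr : ∀ e ∈ E, #e = r) (hne : E.Nonempty)
    (hfree : ¬ Contains F E) : minPosCoDeg r n E ≤ coPlusEx r n F := by
  refine le_csSup ((Set.finite_range (minPosCoDeg r n)).bddAbove.mono ?_) ⟨E, hr, hne, hfree, rfl⟩
  rintro _ ⟨E', -, -, -, rfl⟩
  exact ⟨E', rfl⟩

lemma le_minPosCoDeg {r n k : ℕ} {E : Finset (Finset (Fin n))} (hr : ∀ e ∈ E, #e = r)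
    (hne : E.Nonempty) (hk : ∀ S, #S = r - 1 → 0 < coDeg E S → k ≤ coDeg E S) :
    k ≤ minPosCoDeg r n E := by
  obtain ⟨e, he⟩ := hne
  obtain ⟨S, hSe, hS⟩ := exists_subset_card_eq (n := r - 1) (by rw [hr e he]; exact Nat.sub_le r 1)
  have hpos : 0 < coDeg E S := card_pos.mpr ⟨e, mem_filter.mpr ⟨he, hSe⟩⟩
  exact le_csInf ⟨_, S, hS, rfl, hpos⟩ fun _ ⟨S', hS', hd, hpos'⟩ => hd ▸ hk S' hS' (hd ▸ hpos')

section Embedding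

variable {β : Type*} {n : ℕ} (ι : β ↪ Fin n) (E : Finset (Finset β))

lemma exists_map_eq_of_coDeg_image_map_pos {S : Finset (Fin n)}
    (h : 0 < coDeg (E.image (map ι)) S) : ∃ t : Finset β, t.map ι = S := by
  obtain ⟨_, he⟩ := card_pos.mp h
  obtain ⟨⟨e, -, rfl⟩, hSe⟩ := by simpa only [mem_filter, mem_image] using he
  obtain ⟨t, -, rfl⟩ := subset_map_iff.mp hSe
  exact ⟨t, rfl⟩

variable [DecidableEq β]

lemma coDeg_image_map (t : Finset β) :
    coDeg (E.image (map ι)) (t.map ι) = #{e ∈ E | t ⊆ e} := by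
  rw [coDeg, filter_image, card_image_of_injective _ (map_injective ι)]
  simp only [map_subset_map]

lemma Contains.of_image_map {α : Type*} [DecidableEq α] {F : Finset (Finset α)}
    (hF : ∀ i, ∃ e ∈ F, i ∈ e) (h : Contains F (E.image (map ι))) : Contains F E := by
  obtain ⟨f, hf, hFE⟩ := h
  have hrange : ∀ i, ∃ x, ι x = f i := by
    intro i
    obtain ⟨e, he, hie⟩ := hF i
    obtain ⟨e', -, he'⟩ := mem_image.mp (hFE e he)
    obtain ⟨x, -, hx⟩ := mem_map.mp (he' ▸ mem_image_of_mem f hie)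
    exact ⟨x, hx⟩
  choose g hg using hrange
  have hιg : ι ∘ g = f := funext hg
  refine ⟨g, .of_comp (f := ι) (hιg ▸ hf), fun e he => ?_⟩
  obtain ⟨e', he', hee'⟩ := mem_image.mp (hFE e he)
  have : e'.map ι = (e.image g).map ι := by rw [hee', map_eq_image, image_image, hιg]
  exact map_injective ι this ▸ he'

end Embedding

lemma le_coPlusEx_of_card_le {α β : Type*} [DecidableEq α] [DecidableEq β] [Fintype β]
    {F : Finset (Finset α)} (hF : ∀ i, ∃ e ∈ F, i ∈ e) {r n k : ℕ} (hn : Fintype.card β ≤ n)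
    {E : Finset (Finset β)} (hr : ∀ e ∈ E, #e = r) (hne : E.Nonempty)
    (hfree : ¬ Contains F E)
    (hk : ∀ t : Finset β, #t = r - 1 → 0 < #{e ∈ E | t ⊆ e} → k ≤ #{e ∈ E | t ⊆ e}) :
    k ≤ coPlusEx r n F := by
  obtain ⟨ι⟩ := Function.Embedding.nonempty_of_card_le (hn.trans_eq (Fintype.card_fin n).symm)
  have hr' : ∀ e ∈ E.image (map ι), #e = r := by
    simp only [mem_image, forall_exists_index, and_imp]
    rintro _ e he rfl
    rw [card_map, hr e he]
  refine (le_minPosCoDeg hr' (hne.image _) fun S hS hpos => ?_).trans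
    (minPosCoDeg_le_coPlusEx hr' (hne.image _) fun h => hfree (h.of_image_map ι E hF))
  obtain ⟨t, rfl⟩ := exists_map_eq_of_coDeg_image_map_pos ι E hpos
  rw [coDeg_image_map] at hpos ⊢
  exact hk t (by rwa [card_map] at hS) hpos

def IsSidon {G : Type*} [Add G] (A : Finset G) : Prop :=
  ∀ a ∈ A, ∀ b ∈ A, ∀ c ∈ A, ∀ d ∈ A, a + b = c + d → a = c ∨ a = d

lemma sum_triple {M : Type*} [AddCommMonoid M] [DecidableEq M] {a b c : M} (hab : a ≠ b)
    (hac : a ≠ c) (hbc : b ≠ c) : ∑ x ∈ {a, b, c}, x = a + b + c := by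
  rw [sum_insert (by simp [hab, hac]), sum_pair hbc, add_assoc]

section SumHypergraph

variable {G : Type*} [AddCommGroup G] [Fintype G] [DecidableEq G] {A : Finset G}

def sumHypergraph (A : Finset G) : Finset (Finset G) :=
  {e ∈ univ.powersetCard 3 | ∑ x ∈ e, x ∈ A}

lemma mem_sumHypergraph {e : Finset G} : e ∈ sumHypergraph A ↔ #e = 3 ∧ ∑ x ∈ e, x ∈ A := by
  simp [sumHypergraph]

lemma card_sub_two_le_card_filter_sumHypergraph {a b : G} (hab : a ≠ b) :
    #A - 2 ≤ #{e ∈ sumHypergraph A | {a, b} ⊆ e} := by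
  have hsdiff := le_card_sdiff {a + a + b, a + b + b} A
  have hpair : #({a + a + b, a + b + b} : Finset G) ≤ 2 := card_le_two
  have hthird : ∀ s ∈ A \ {a + a + b, a + b + b}, a ≠ s - (a + b) ∧ b ≠ s - (a + b) := by
    intro s hs
    simp only [mem_sdiff, mem_insert, mem_singleton, not_or] at hs
    rw [Ne, Ne, eq_sub_iff_add_eq, eq_sub_iff_add_eq, ← add_assoc, add_comm b]
    exact ⟨fun h => hs.2.1 h.symm, fun h => hs.2.2 h.symm⟩
  refine (by omega : #A - 2 ≤ #(A \ {a + a + b, a + b + b})).trans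
    (card_le_card_of_injOn (fun s => {a, b, s - (a + b)}) (fun s hs => ?_) fun s hs s' hs' h => ?_)
  · obtain ⟨hac, hbc⟩ := hthird s hs
    refine mem_filter.mpr
      ⟨mem_sumHypergraph.mpr ⟨card_eq_three.mpr ⟨_, _, _, hab, hac, hbc, rfl⟩, ?_⟩,
        by simp [insert_subset_iff]⟩
    rw [sum_triple hab hac hbc, add_sub_cancel]
    exact (mem_sdiff.mp hs).1
  · obtain ⟨hac, hbc⟩ := hthird s hs
    obtain ⟨hac', hbc'⟩ := hthird s' hs'
    have hsum := congrArg (∑ x ∈ ·, x) h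
    simpa only [sum_triple hab hac hbc, sum_triple hab hac' hbc', add_sub_cancel] using hsum

end SumHypergraph

lemma IsSidon.not_contains_K222_sumHypergraph {G : Type*} [AddCommGroup G] [Fintype G]
    [DecidableEq G] {A : Finset G} (hA : IsSidon A) : ¬ Contains K222 (sumHypergraph A) := by
  rintro ⟨f, hf, hE⟩
  have hsum : ∀ e ∈ K222, ∑ i ∈ e, f i ∈ A := fun e he => by
    simpa only [sum_image hf.injOn] using (mem_sumHypergraph.mp (hE e he)).2
  have triple : ∀ i j k : Fin 6, i ≠ j → i ≠ k → j ≠ k → {i, j, k} ∈ K222 →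
      f i + (f j + f k) ∈ A := fun i j k hij hik hjk he => by
    simpa only [sum_insert (by simp [hij, hik] : i ∉ ({j, k} : Finset _)), sum_pair hjk]
      using hsum _ he
  rcases hA _ (triple 0 2 4 (by decide) (by decide) (by decide) (by decide))
    _ (triple 1 3 4 (by decide) (by decide) (by decide) (by decide))
    _ (triple 1 2 4 (by decide) (by decide) (by decide) (by decide))
    _ (triple 0 3 4 (by decide) (by decide) (by decide) (by decide)) (by abel) with h | h
  · exact (by decide : (0 : Fin 6) ≠ 1) (hf (add_right_cancel h))
  · exact (by decide : (2 : Fin 6) ≠ 3) (hf (add_right_cancel (add_left_cancel h)))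

section Parabola

variable (K : Type*) [CommRing K] [Fintype K] [DecidableEq K]

def parabola : Finset (K × K) := univ.image fun x => (x, x ^ 2)

lemma card_parabola : #(parabola K) = Fintype.card K :=
  card_image_of_injective _ fun _ _ h => congrArg Prod.fst h

variable {K} [IsDomain K]

lemma isSidon_parabola (h2 : (2 : K) ≠ 0) : IsSidon (parabola K) := by
  simp only [IsSidon, parabola, mem_image, mem_univ, true_and, forall_exists_index,
    forall_apply_eq_imp_iff, Prod.mk_add_mk, Prod.mk.injEq, and_imp]
  intro x y u v h1 h2'
  have hxy : x * y = u * v :=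
    mul_left_cancel₀ h2 (by linear_combination (x + y + u + v) * h1 - h2')
  rcases mul_eq_zero.mp (by linear_combination (-u) * h1 + hxy : (u - x) * (u - y) = 0) with h | h
  · obtain rfl := sub_eq_zero.mp h
    exact .inl ⟨rfl, rfl⟩
  · obtain rfl : v = x := by linear_combination -h1 - h
    exact .inr ⟨rfl, rfl⟩

end Parabola

lemma sub_two_le_coPlusEx_K222 {p n : ℕ} (hp : p.Prime) (hn : p * p ≤ n) :
    p - 2 ≤ coPlusEx 3 n K222 := by
  obtain rfl | hp2 := eq_or_ne p 2
  · exact Nat.zero_le _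
  have := Fact.mk hp
  have hcodeg (a b : ZMod p × ZMod p) (hab : a ≠ b) :
      p - 2 ≤ #{e ∈ sumHypergraph (parabola (ZMod p)) | {a, b} ⊆ e} := by
    simpa only [card_parabola, ZMod.card] using
      card_sub_two_le_card_filter_sumHypergraph (A := parabola (ZMod p)) hab
  have hne : (sumHypergraph (parabola (ZMod p))).Nonempty := by
    obtain ⟨a, b, hab⟩ := exists_pair_ne (ZMod p × ZMod p)
    have hpos : 0 < #{e ∈ sumHypergraph (parabola (ZMod p)) | {a, b} ⊆ e} := by
      have := hp.two_le
      have := hcodeg a b hab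
      omega
    exact (card_pos.mp hpos).mono (filter_subset _ _)
  have hsidon := isSidon_parabola (Ring.two_ne_zero (by rwa [ZMod.ringChar_zmod_n]))
  refine le_coPlusEx_of_card_le (by decide) (by simpa [ZMod.card] using hn)
    (fun e he => (mem_sumHypergraph.mp he).1) hne hsidon.not_contains_K222_sumHypergraph
    fun t ht _ => ?_
  obtain ⟨a, b, hab, rfl⟩ := card_eq_two.mp ht
  exact hcodeg a b hab

/-- There are a constant `c > 0` and an integer `N` such that
`co⁺ex(n, K₂,₂,₂) ≥ c·n^(1/2)` for all `n ≥ N`. -/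
theorem coPlusEx_K222_lower :
    ∃ c : ℝ, 0 < c ∧ ∃ N : ℕ, ∀ n : ℕ, N ≤ n →
      c * (n : ℝ) ^ ((1 : ℝ) / 2) ≤ (coPlusEx 3 n K222 : ℝ) := by
  refine ⟨1 / 4, by norm_num, 100, fun n hn => ?_⟩
  set m := Nat.sqrt n
  have hm : 10 ≤ m := Nat.le_sqrt.mpr (by omega)
  obtain ⟨p, hp, hmp, hpm⟩ := Nat.exists_prime_lt_and_le_two_mul (m / 2) (by omega)
  have hpn : p * p ≤ n := (Nat.mul_self_le_mul_self (by omega : p ≤ m)).trans (Nat.sqrt_le n)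
  have hsqrt : √(n : ℝ) < m + 1 := Real.real_sqrt_lt_nat_sqrt_succ
  have hmp' : (m : ℝ) + 1 ≤ 2 * p := by exact_mod_cast (by omega : m + 1 ≤ 2 * p)
  have hp4 : (4 : ℝ) ≤ p := by exact_mod_cast (by omega : 4 ≤ p)
  calc 1 / 4 * (n : ℝ) ^ ((1 : ℝ) / 2) = 1 / 4 * √(n : ℝ) := by rw [Real.sqrt_eq_rpow]
    _ ≤ ((p - 2 : ℕ) : ℝ) := by rw [Nat.cast_sub (by omega)]; push_cast; linarith
    _ ≤ coPlusEx 3 n K222 := by exact_mod_cast sub_two_le_coPlusEx_K222 hp hpn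
end
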